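/- arXiv:2006.14272 — 2 statements merged into one kernel-verified Lean document; each statement's English description precedes it below -/
import Mathlib

section
/- Let C be a linear subspace of B_b containing the constant functions and let H : C → ℝ be a convex premium principle. Then for every X ∈ B_b there exists a normalized positive linear functional μ on B_b with R_Max(X) = μ(X) − H*(μ), and R_Max(X) = max over all normalized positive linear functionals μ of μ(X) − H*(μ). Moreover, H*(μ) = sup_{X ∈ B_b} (μ(X) − R_Max(X)) for every normalized positive linear functional μ on B_b. -/
/-!
`R_Max` is a convex monetary risk measure on `B_b`: cash additivity and monotonicity are
inherited from `H`, and convexity holds because convex combinations of claims in `C`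
dominating `X` and `Y` dominate the corresponding combination of `X` and `Y`.
A real convex function on a vector space has a linear subgradient at every point
(M. Riesz extension applied to the cone over its epigraph). At `X`, a subgradient of `R_Max`
is positive and normalized because `R_Max` is monotone and cash additive, so it is a
finitely additive probability `μ` with `μ Y - R_Max Y ≤ μ X - R_Max X` for all `Y ∈ B_b`.
For every such `μ`, `H*(μ) = sup_{Y ∈ B_b} (μ Y - R_Max Y)`: one inequality is
`R_Max ≤ H` on `C`, the other is `μ X - H X₀ ≤ μ X₀ - H X₀` whenever `X₀ ≥ X`.
For the subgradient this supremum is attained at `X`, which gives the maximum.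
-/

open MeasureTheory

/-- The set of bounded measurable functions `Ω → ℝ`. -/
def Bb (Ω : Type*) [MeasurableSpace Ω] : Set (Ω → ℝ) :=
  {X | Measurable X ∧ ∃ c : ℝ, ∀ ω, |X ω| ≤ c}

/-- `H` is a premium principle on `C`: (P1) cash additivity and
(P2) `H 0 = 0` and nonnegativity on nonnegative claims. -/
def IsPremium {Ω : Type*} (C : Set (Ω → ℝ)) (H : (Ω → ℝ) → ℝ) : Prop :=
  (∀ X ∈ C, ∀ m : ℝ, H (fun ω => X ω + m) = H X + m) ∧
  H (fun _ => 0) = 0 ∧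
  ∀ X ∈ C, (∀ ω, 0 ≤ X ω) → 0 ≤ H X

/-- `R` is a (monetary) risk measure on `B_b`. -/
def IsRisk {Ω : Type*} [MeasurableSpace Ω] (R : (Ω → ℝ) → ℝ) : Prop :=
  (∀ X ∈ Bb Ω, ∀ m : ℝ, R (fun ω => X ω + m) = R X + m) ∧
  R (fun _ => 0) = 0 ∧
  ∀ X ∈ Bb Ω, ∀ Y ∈ Bb Ω, (∀ ω, X ω ≤ Y ω) → R X ≤ R Y

/-- `D` is a deviation measure on `C`. -/
def IsDeviation {Ω : Type*} (C : Set (Ω → ℝ)) (D : (Ω → ℝ) → ℝ) : Prop :=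
  (∀ X ∈ C, ∀ m : ℝ, D (fun ω => X ω + m) = D X) ∧
  D (fun _ => 0) = 0 ∧
  ∀ X ∈ C, 0 ≤ D X

/-- The maximal risk measure `R_Max(X) = inf {H X₀ | X₀ ∈ C, X₀ ≥ X}`. -/
noncomputable def RMax {Ω : Type*} (C : Set (Ω → ℝ)) (H : (Ω → ℝ) → ℝ) (X : Ω → ℝ) : ℝ :=
  sInf {y | ∃ X₀ ∈ C, (∀ ω, X ω ≤ X₀ ω) ∧ H X₀ = y}

/-- The minimal deviation measure `D_Min = H - R_Max`. -/
noncomputable def DMin {Ω : Type*} (C : Set (Ω → ℝ)) (H : (Ω → ℝ) → ℝ) (X : Ω → ℝ) : ℝ :=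
  H X - RMax C H X

/-- A normalized positive linear functional on `B_b` (a finitely additive probability). -/
def IsNPLF {Ω : Type*} [MeasurableSpace Ω] (μ : (Ω → ℝ) → ℝ) : Prop :=
  (∀ X ∈ Bb Ω, ∀ Y ∈ Bb Ω, μ (fun ω => X ω + Y ω) = μ X + μ Y) ∧
  (∀ X ∈ Bb Ω, ∀ c : ℝ, μ (fun ω => c * X ω) = c * μ X) ∧
  (∀ X ∈ Bb Ω, (∀ ω, 0 ≤ X ω) → 0 ≤ μ X) ∧
  μ (fun _ => 1) = 1

/-- The convex dual `H*(μ) = sup_{X ∈ C} (μ X - H X)`, valued in `EReal`. -/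
noncomputable def Hstar {Ω : Type*} (C : Set (Ω → ℝ)) (H : (Ω → ℝ) → ℝ)
    (μ : (Ω → ℝ) → ℝ) : EReal :=
  ⨆ X ∈ C, ((μ X - H X : ℝ) : EReal)

/-- `H` is convex on `C`. -/
def IsConvexOn {Ω : Type*} (C : Set (Ω → ℝ)) (H : (Ω → ℝ) → ℝ) : Prop :=
  ∀ X ∈ C, ∀ Y ∈ C, ∀ l : ℝ, 0 ≤ l → l ≤ 1 →
    H (fun ω => l * X ω + (1 - l) * Y ω) ≤ l * H X + (1 - l) * H Y

theorem ConvexOn.exists_linearMap_sub_le {E : Type*} [AddCommGroup E] [Module ℝ E] {f : E → ℝ}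
    (hf : ConvexOn ℝ Set.univ f) (x : E) : ∃ ℓ : E →ₗ[ℝ] ℝ, ∀ y, ℓ y - f y ≤ ℓ x - f x := by
  set epi : Set (E × ℝ) := {p | f (x + p.1) - f x ≤ p.2}
  have hepi : Convex ℝ epi := by
    simpa [epi, sub_eq_add_neg] using ((hf.translate_right x).add_const (-f x)).convex_epigraph
  have hzero : (0 : E × ℝ) ∈ ConvexCone.hull ℝ epi := ConvexCone.subset_hull (by simp [epi])
  let K := (ConvexCone.hull ℝ epi).toPointedCone hzero
  let f₀ : (E × ℝ) →ₗ.[ℝ] ℝ :=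
    ⟨LinearMap.range (LinearMap.inr ℝ E ℝ), (LinearMap.snd ℝ E ℝ).domRestrict _⟩
  have nonneg : ∀ p : f₀.domain, (p : E × ℝ) ∈ K → 0 ≤ f₀ p := by
    rintro ⟨_, s, rfl⟩ hp
    obtain ⟨r, hr, q, hq, hrq⟩ := (ConvexCone.mem_hull_of_convex hepi).1 hp
    have hq₁ : q.1 = 0 := by simpa [hr.ne'] using congrArg Prod.fst hrq
    have hq₂ : r * q.2 = s := congrArg Prod.snd hrq
    have : 0 ≤ q.2 := by simpa [epi, hq₁] using hq
    change 0 ≤ s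
    rw [← hq₂]; positivity
  have dense : ∀ p : E × ℝ, ∃ q : f₀.domain, (q : E × ℝ) + p ∈ K := fun p =>
    ⟨⟨(0, f (x + p.1) - f x - p.2), _, rfl⟩, ConvexCone.subset_hull (by simp [epi])⟩
  obtain ⟨g, hg_ext, hg_nonneg⟩ := riesz_extension K f₀ nonneg dense
  have hg_inr (s : ℝ) : g (0, s) = s := hg_ext ⟨(0, s), s, rfl⟩
  -- `g ≥ 0` on the cone over the epigraph of `f (x + ·) - f x` and `g (0, s) = s`,
  -- so `-g (·, 0)` is a subgradient of `f` at `x`.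
  refine ⟨-(g ∘ₗ LinearMap.inl ℝ E ℝ), fun y => ?_⟩
  have hy : (y - x, f y - f x) ∈ K := ConvexCone.subset_hull (by simp [epi])
  have hsplit : g (y - x, f y - f x) = g (y, 0) - g (x, 0) + (f y - f x) := by
    have : (y - x, f y - f x) = ((y, 0) - (x, 0)) + (0, f y - f x) := by ext <;> simp
    rw [this, map_add, map_sub, hg_inr]
  have := hg_nonneg _ hy
  simp only [LinearMap.neg_apply, LinearMap.comp_apply, LinearMap.inl_apply]
  linarith

namespace Bb

variable {Ω : Type*} [MeasurableSpace Ω]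

lemma const_mem (m : ℝ) : (fun _ : Ω => m) ∈ Bb Ω :=
  ⟨measurable_const, |m|, fun _ => le_rfl⟩

lemma exists_le {X : Ω → ℝ} (hX : X ∈ Bb Ω) : ∃ c, ∀ ω, X ω ≤ c :=
  let ⟨_, c, hc⟩ := hX; ⟨c, fun ω => (abs_le.1 (hc ω)).2⟩

lemma exists_ge {X : Ω → ℝ} (hX : X ∈ Bb Ω) : ∃ c, ∀ ω, c ≤ X ω :=
  let ⟨_, c, hc⟩ := hX; ⟨-c, fun ω => (abs_le.1 (hc ω)).1⟩

variable (Ω) in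
def submodule : Submodule ℝ (Ω → ℝ) where
  carrier := Bb Ω
  add_mem' := fun ⟨hXm, cX, hcX⟩ ⟨hYm, cY, hcY⟩ =>
    ⟨hXm.add hYm, cX + cY, fun ω => (abs_add_le _ _).trans (add_le_add (hcX ω) (hcY ω))⟩
  zero_mem' := const_mem 0
  smul_mem' := fun c _ ⟨hXm, cX, hcX⟩ =>
    ⟨hXm.const_smul c, |c| * cX, fun ω => by
      simpa [abs_mul] using mul_le_mul_of_nonneg_left (hcX ω) (abs_nonneg c)⟩

lemma add_mem {X Y : Ω → ℝ} (hX : X ∈ Bb Ω) (hY : Y ∈ Bb Ω) : (fun ω => X ω + Y ω) ∈ Bb Ω :=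
  (submodule Ω).add_mem hX hY

lemma sub_mem {X Y : Ω → ℝ} (hX : X ∈ Bb Ω) (hY : Y ∈ Bb Ω) : (fun ω => X ω - Y ω) ∈ Bb Ω :=
  (submodule Ω).sub_mem hX hY

lemma smul_mem {X : Ω → ℝ} (hX : X ∈ Bb Ω) (c : ℝ) : (fun ω => c * X ω) ∈ Bb Ω :=
  (submodule Ω).smul_mem c hX

end Bb

section RMax

variable {Ω : Type*} {C : Set (Ω → ℝ)} {H : (Ω → ℝ) → ℝ}

lemma RMax_eq_iInf (X : Ω → ℝ) :
    RMax C H X = ⨅ X₀ : {X₀ // X₀ ∈ C ∧ ∀ ω, X ω ≤ X₀ ω}, H X₀ := by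
  rw [RMax, iInf, Set.range]
  congr 1
  ext y
  simp [and_assoc]

lemma IsPremium.le_of_forall_le (hconst : ∀ m : ℝ, (fun _ => m) ∈ C)
    (haddC : ∀ X ∈ C, ∀ Y ∈ C, (fun ω => X ω + Y ω) ∈ C) (hH : IsPremium C H)
    {X₀ : Ω → ℝ} (hX₀ : X₀ ∈ C) {m : ℝ} (hm : ∀ ω, m ≤ X₀ ω) : m ≤ H X₀ := by
  have hshift : (fun ω => X₀ ω + -m) ∈ C := haddC _ hX₀ _ (hconst (-m))
  have hpos := hH.2.2 _ hshift fun ω => by linarith [hm ω]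
  have hcash := hH.1 _ hshift m
  simp only [neg_add_cancel_right] at hcash
  linarith

variable [MeasurableSpace Ω]

lemma RMax_le (hconst : ∀ m : ℝ, (fun _ => m) ∈ C)
    (haddC : ∀ X ∈ C, ∀ Y ∈ C, (fun ω => X ω + Y ω) ∈ C) (hH : IsPremium C H)
    {X X₀ : Ω → ℝ} (hX : X ∈ Bb Ω) (hX₀ : X₀ ∈ C) (hle : ∀ ω, X ω ≤ X₀ ω) :
    RMax C H X ≤ H X₀ := by
  obtain ⟨m, hm⟩ := Bb.exists_ge hX
  rw [RMax_eq_iInf]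
  refine ciInf_le ⟨m, ?_⟩ (⟨X₀, hX₀, hle⟩ : {X₀ // X₀ ∈ C ∧ ∀ ω, X ω ≤ X₀ ω})
  rintro _ ⟨⟨Y₀, hY₀, hXY⟩, rfl⟩
  exact hH.le_of_forall_le hconst haddC hY₀ fun ω => (hm ω).trans (hXY ω)

lemma le_RMax (hconst : ∀ m : ℝ, (fun _ => m) ∈ C) {X : Ω → ℝ} (hX : X ∈ Bb Ω) {b : ℝ}
    (h : ∀ X₀ ∈ C, (∀ ω, X ω ≤ X₀ ω) → b ≤ H X₀) : b ≤ RMax C H X := by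
  obtain ⟨c, hc⟩ := Bb.exists_le hX
  have : Nonempty {X₀ // X₀ ∈ C ∧ ∀ ω, X ω ≤ X₀ ω} := ⟨⟨_, hconst c, hc⟩⟩
  rw [RMax_eq_iInf]
  exact le_ciInf fun X₀ => h X₀ X₀.2.1 X₀.2.2

lemma RMax_le_self (hCB : C ⊆ Bb Ω) (hconst : ∀ m : ℝ, (fun _ => m) ∈ C)
    (haddC : ∀ X ∈ C, ∀ Y ∈ C, (fun ω => X ω + Y ω) ∈ C) (hH : IsPremium C H)
    {X : Ω → ℝ} (hX : X ∈ C) : RMax C H X ≤ H X :=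
  RMax_le hconst haddC hH (hCB hX) hX fun _ => le_rfl

lemma RMax_add_const_le (hconst : ∀ m : ℝ, (fun _ => m) ∈ C)
    (haddC : ∀ X ∈ C, ∀ Y ∈ C, (fun ω => X ω + Y ω) ∈ C) (hH : IsPremium C H)
    {X : Ω → ℝ} (hX : X ∈ Bb Ω) (m : ℝ) :
    RMax C H (fun ω => X ω + m) ≤ RMax C H X + m := by
  suffices RMax C H (fun ω => X ω + m) - m ≤ RMax C H X by linarith
  refine le_RMax hconst hX fun X₀ hX₀ hle => ?_
  have hshift : (fun ω => X₀ ω + m) ∈ C := haddC _ hX₀ _ (hconst m)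
  have := RMax_le hconst haddC hH (Bb.add_mem hX (Bb.const_mem m)) hshift
    fun ω => add_le_add_left (hle ω) m
  linarith [hH.1 X₀ hX₀ m]

theorem isRisk_RMax (hconst : ∀ m : ℝ, (fun _ => m) ∈ C)
    (haddC : ∀ X ∈ C, ∀ Y ∈ C, (fun ω => X ω + Y ω) ∈ C) (hH : IsPremium C H) :
    IsRisk (RMax C H) := by
  refine ⟨fun X hX m => le_antisymm (RMax_add_const_le hconst haddC hH hX m) ?_, ?_, ?_⟩
  · have := RMax_add_const_le hconst haddC hH (Bb.add_mem hX (Bb.const_mem m)) (-m)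
    simp only [add_neg_cancel_right] at this
    linarith
  · refine le_antisymm ?_ (le_RMax hconst (Bb.const_mem 0) fun X₀ hX₀ hle =>
      hH.le_of_forall_le hconst haddC hX₀ hle)
    exact (RMax_le hconst haddC hH (Bb.const_mem 0) (hconst 0) fun _ => le_rfl).trans_eq hH.2.1
  · exact fun X hX Y hY hXY => le_RMax hconst hY fun X₀ hX₀ hle =>
      RMax_le hconst haddC hH hX hX₀ fun ω => (hXY ω).trans (hle ω)

theorem isConvexOn_RMax (hconst : ∀ m : ℝ, (fun _ => m) ∈ C)
    (haddC : ∀ X ∈ C, ∀ Y ∈ C, (fun ω => X ω + Y ω) ∈ C)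
    (hsmulC : ∀ X ∈ C, ∀ c : ℝ, (fun ω => c * X ω) ∈ C)
    (hH : IsPremium C H) (hconv : IsConvexOn C H) :
    IsConvexOn (Bb Ω) (RMax C H) := by
  intro X hX Y hY l hl₀ hl₁
  obtain ⟨cX, hcX⟩ := Bb.exists_le hX
  obtain ⟨cY, hcY⟩ := Bb.exists_le hY
  have : Nonempty {X₀ // X₀ ∈ C ∧ ∀ ω, X ω ≤ X₀ ω} := ⟨⟨_, hconst cX, hcX⟩⟩
  have : Nonempty {Y₀ // Y₀ ∈ C ∧ ∀ ω, Y ω ≤ Y₀ ω} := ⟨⟨_, hconst cY, hcY⟩⟩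
  have hcomb : (fun ω => l * X ω + (1 - l) * Y ω) ∈ Bb Ω :=
    Bb.add_mem (Bb.smul_mem hX l) (Bb.smul_mem hY (1 - l))
  rw [RMax_eq_iInf X, RMax_eq_iInf Y, Real.mul_iInf_of_nonneg hl₀,
    Real.mul_iInf_of_nonneg (sub_nonneg.2 hl₁)]
  refine le_ciInf_add_ciInf fun ⟨X₀, hX₀, hXX₀⟩ ⟨Y₀, hY₀, hYY₀⟩ => ?_
  calc RMax C H (fun ω => l * X ω + (1 - l) * Y ω)
      ≤ H (fun ω => l * X₀ ω + (1 - l) * Y₀ ω) :=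
        RMax_le hconst haddC hH hcomb (haddC _ (hsmulC X₀ hX₀ l) _ (hsmulC Y₀ hY₀ (1 - l)))
          fun ω => add_le_add (mul_le_mul_of_nonneg_left (hXX₀ ω) hl₀)
            (mul_le_mul_of_nonneg_left (hYY₀ ω) (sub_nonneg.2 hl₁))
    _ ≤ l * H X₀ + (1 - l) * H Y₀ := hconv X₀ hX₀ Y₀ hY₀ l hl₀ hl₁

end RMax

section Dual

variable {Ω : Type*} [MeasurableSpace Ω]

lemma IsNPLF.mono {μ : (Ω → ℝ) → ℝ} (hμ : IsNPLF μ) {X Y : Ω → ℝ} (hX : X ∈ Bb Ω)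
    (hY : Y ∈ Bb Ω) (hXY : ∀ ω, X ω ≤ Y ω) : μ X ≤ μ Y := by
  have hdiff := Bb.sub_mem hY hX
  have hsplit := hμ.1 X hX _ hdiff
  simp only [add_sub_cancel] at hsplit
  linarith [hμ.2.2.1 _ hdiff fun ω => sub_nonneg.2 (hXY ω)]

lemma IsConvexOn.exists_linearMap_sub_le {R : (Ω → ℝ) → ℝ} (hconv : IsConvexOn (Bb Ω) R)
    {X : Ω → ℝ} (hX : X ∈ Bb Ω) :
    ∃ ℓ : (Ω → ℝ) →ₗ[ℝ] ℝ, ∀ Y ∈ Bb Ω, ℓ Y - R Y ≤ ℓ X - R X := by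
  have hconvOn : ConvexOn ℝ Set.univ fun V : Bb.submodule Ω => R V := by
    refine ⟨convex_univ, fun V _ W _ a b ha _ hab => ?_⟩
    obtain rfl : b = 1 - a := by linarith
    exact hconv V V.2 W W.2 a ha (by linarith)
  obtain ⟨g, hg⟩ := hconvOn.exists_linearMap_sub_le ⟨X, hX⟩
  obtain ⟨ℓ, hℓ⟩ := LinearMap.exists_extend g
  refine ⟨ℓ, fun Y hY => ?_⟩
  have hrestrict (V : Bb.submodule Ω) : ℓ V = g V := LinearMap.congr_fun hℓ V
  simpa only [← hrestrict] using hg ⟨Y, hY⟩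

lemma IsRisk.isNPLF_of_sub_le {R : (Ω → ℝ) → ℝ} (hR : IsRisk R) {X : Ω → ℝ} (hX : X ∈ Bb Ω)
    (ℓ : (Ω → ℝ) →ₗ[ℝ] ℝ) (hℓ : ∀ Y ∈ Bb Ω, ℓ Y - R Y ≤ ℓ X - R X) : IsNPLF ℓ := by
  refine ⟨fun Y _ Z _ => map_add ℓ Y Z, fun Y _ c => map_smul ℓ c Y, fun Z hZ hZ₀ => ?_, ?_⟩
  · have hmono := hR.2.2 _ (Bb.sub_mem hX hZ) X hX fun ω => sub_le_self _ (hZ₀ ω)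
    have := hℓ _ (Bb.sub_mem hX hZ)
    have hsub : ℓ (fun ω => X ω - Z ω) = ℓ X - ℓ Z := map_sub ℓ X Z
    linarith
  · have hup := hℓ _ (Bb.add_mem hX (Bb.const_mem 1))
    have hdown := hℓ _ (Bb.add_mem hX (Bb.const_mem (-1)))
    have hadd₁ : ℓ (fun ω => X ω + 1) = ℓ X + ℓ (fun _ => 1) := map_add ℓ X _
    have hadd₂ : ℓ (fun ω => X ω + -1) = ℓ X - ℓ (fun _ => 1) := by
      rw [← map_sub]; rfl
    linarith [hR.1 X hX 1, hR.1 X hX (-1)]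

lemma IsRisk.exists_isNPLF_sub_le {R : (Ω → ℝ) → ℝ} (hR : IsRisk R)
    (hconv : IsConvexOn (Bb Ω) R) {X : Ω → ℝ} (hX : X ∈ Bb Ω) :
    ∃ μ : (Ω → ℝ) → ℝ, IsNPLF μ ∧ ∀ Y ∈ Bb Ω, μ Y - R Y ≤ μ X - R X :=
  let ⟨ℓ, hℓ⟩ := hconv.exists_linearMap_sub_le hX
  ⟨ℓ, hR.isNPLF_of_sub_le hX ℓ hℓ, hℓ⟩

variable {C : Set (Ω → ℝ)} {H : (Ω → ℝ) → ℝ}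

theorem Hstar_eq_iSup_RMax (hCB : C ⊆ Bb Ω) (hconst : ∀ m : ℝ, (fun _ => m) ∈ C)
    (haddC : ∀ X ∈ C, ∀ Y ∈ C, (fun ω => X ω + Y ω) ∈ C) (hH : IsPremium C H)
    {μ : (Ω → ℝ) → ℝ} (hμ : IsNPLF μ) :
    Hstar C H μ = ⨆ X ∈ Bb Ω, ((μ X - RMax C H X : ℝ) : EReal) := by
  refine le_antisymm (iSup₂_le fun Y hY => ?_) (iSup₂_le fun X hX => ?_)
  · refine le_iSup₂_of_le Y (hCB hY) (EReal.coe_le_coe_iff.2 ?_)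
    linarith [RMax_le_self hCB hconst haddC hH hY]
  · refine EReal.le_of_forall_lt_iff_le.1 fun z hz => EReal.coe_le_coe_iff.2 ?_
    have hle : ∀ X₀ ∈ C, (∀ ω, X ω ≤ X₀ ω) → μ X - z ≤ H X₀ := fun X₀ hX₀ hXX₀ => by
      have : ((μ X₀ - H X₀ : ℝ) : EReal) < z := (le_iSup₂_of_le X₀ hX₀ le_rfl).trans_lt hz
      linarith [EReal.coe_lt_coe_iff.1 this, hμ.mono hX (hCB hX₀) hXX₀]
    linarith [le_RMax hconst hX hle]

end Dual

/-- dual representation of the maximal risk measure of a convex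
premium principle: `R_Max(X) = max_μ (μ(X) − H*(μ))` over all normalized positive
linear functionals `μ` on `B_b`, the maximum being attained, and
`H*(μ) = sup_{X ∈ B_b} (μ(X) − R_Max(X))`. -/
theorem convex_dual_representation {Ω : Type*} [MeasurableSpace Ω]
    (C : Set (Ω → ℝ)) (H : (Ω → ℝ) → ℝ)
    (hCB : C ⊆ Bb Ω)
    (hconst : ∀ m : ℝ, (fun _ => m) ∈ C)
    (haddC : ∀ X ∈ C, ∀ Y ∈ C, (fun ω => X ω + Y ω) ∈ C)
    (hsmulC : ∀ X ∈ C, ∀ c : ℝ, (fun ω => c * X ω) ∈ C)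
    (hH : IsPremium C H) (hconv : IsConvexOn C H) :
    (∀ X ∈ Bb Ω,
      (∃ μ : (Ω → ℝ) → ℝ, IsNPLF μ ∧
        ((RMax C H X : ℝ) : EReal) = (μ X : ℝ) - Hstar C H μ) ∧
      (∀ μ : (Ω → ℝ) → ℝ, IsNPLF μ →
        ((μ X : ℝ) : EReal) - Hstar C H μ ≤ ((RMax C H X : ℝ) : EReal))) ∧
    (∀ μ : (Ω → ℝ) → ℝ, IsNPLF μ →
      Hstar C H μ = ⨆ X ∈ Bb Ω, ((μ X - RMax C H X : ℝ) : EReal)) := by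
  have hdual := fun μ (hμ : IsNPLF μ) => Hstar_eq_iSup_RMax hCB hconst haddC hH hμ
  refine ⟨fun X hX => ⟨?_, fun μ hμ => ?_⟩, hdual⟩
  · obtain ⟨μ, hμ, hsub⟩ := (isRisk_RMax hconst haddC hH).exists_isNPLF_sub_le
      (isConvexOn_RMax hconst haddC hsmulC hH hconv) hX
    have hattained : Hstar C H μ = ((μ X - RMax C H X : ℝ) : EReal) := by
      rw [hdual μ hμ]
      exact le_antisymm (iSup₂_le fun Y hY => EReal.coe_le_coe_iff.2 (hsub Y hY))
        (le_iSup₂_of_le X hX le_rfl)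
    refine ⟨μ, hμ, ?_⟩
    rw [hattained, ← EReal.coe_sub, sub_sub_cancel]
  · calc ((μ X : ℝ) : EReal) - Hstar C H μ
        ≤ (μ X : EReal) - ((μ X - RMax C H X : ℝ) : EReal) :=
          EReal.sub_le_sub le_rfl ((hdual μ hμ).symm ▸ le_iSup₂_of_le X hX le_rfl)
      _ = RMax C H X := by rw [← EReal.coe_sub, sub_sub_cancel]
end

section
/- Let P be a probability measure on (Ω, 𝓕) such that (Ω, 𝓕, P) is atomless, and let H : B_b → ℝ be a convex, law-invariant premium principle (with C = B_b) that is continuous from above, i.e. inf_n H(X_n) = 0 for every sequence (X_n) in B_b with X_n ≥ X_{n+1} pointwise for all n and pointwise infimum inf_n X_n = 0. Then H carries a safety loading with respect to P: H(X) ≥ ∫ X dP for all X ∈ B_b. -/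
/-!
Write `X` as the decreasing limit of step functions `Y k` that are constant on the `2 ^ k` blocks
of a dyadic partition of `Ω` into sets of equal probability, ordered along `X`; such partitions
exist because `P` is atomless. On each block `Y k` is the supremum of `X` there, so
`∫ (Y k - X) ≤ 2c / 2 ^ k` when `|X| ≤ c`, and `Y k ↓ X` almost everywhere. Cyclically
permuting the blocks does not change the law of `Y k`, and the average of the permuted copies is
the constant `∫ Y k`, so convexity and law invariance give `∫ Y k ≤ H (Y k)`. Finally, convexity
and continuity from above make `H` upper semicontinuous along decreasing sequences, whence
`∫ X ≤ H X`; the null set where `Y k` does not converge is absorbed by law invariance.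
-/

open MeasureTheory

open Set Filter Topology
open scoped ENNReal

theorem ENNReal.exists_mem_forall_le_two_mul {s : Set ℝ≥0∞} (hs : s.Nonempty) (hs' : sSup s ≠ ∞) :
    ∃ x ∈ s, ∀ y ∈ s, y ≤ 2 * x := by
  rcases eq_or_ne (sSup s) 0 with h | h
  · obtain ⟨x, hx⟩ := hs
    exact ⟨x, hx, fun y hy => (le_sSup hy).trans (h ▸ zero_le)⟩
  · obtain ⟨x, hx, hlt⟩ := lt_sSup_iff.mp (ENNReal.half_lt_self h hs')
    refine ⟨x, hx, fun y hy => (le_sSup hy).trans ?_⟩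
    calc sSup s = 2 * (sSup s / 2) :=
          (ENNReal.mul_div_cancel two_ne_zero ENNReal.ofNat_ne_top).symm
      _ ≤ 2 * x := by gcongr

theorem exists_measure_Iio_le_le_measure_Iic (ν : Measure ℝ) [IsFiniteMeasure ν] {t : ℝ≥0∞}
    (ht₀ : 0 < t) (ht : t < ν univ) : ∃ x, ν (Iio x) ≤ t ∧ t ≤ ν (Iic x) := by
  set S := {x : ℝ | t ≤ ν (Iic x)}
  have hS : S.Nonempty := ((tendsto_measure_Iic_atTop ν).eventually_const_le ht).exists
  have hSbdd : BddBelow S := by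
    have hbot := tendsto_measure_iInter_atBot (μ := ν) (s := Iic)
      (fun _ => measurableSet_Iic.nullMeasurableSet) monotone_Iic ⟨0, measure_ne_top ν _⟩
    rw [iInter_Iic_eq_empty_iff.mpr (by simp [not_bddBelow_univ]), measure_empty] at hbot
    obtain ⟨x, hx⟩ := (hbot.eventually_lt_const ht₀).exists
    exact ⟨x, fun y hy => le_of_not_gt fun hyx =>
      (hy.trans (measure_mono (Iic_subset_Iic.mpr hyx.le))).not_gt hx⟩
  refine ⟨sInf S, ?_, ?_⟩
  · obtain ⟨u, hu_mono, hu_lt, hu_lim⟩ := exists_seq_strictMono_tendsto (sInf S)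
    rw [← iUnion_Iic_eq_Iio_of_lt_of_tendsto hu_lt hu_lim,
      Monotone.measure_iUnion fun _ _ h => Iic_subset_Iic.mpr (hu_mono.monotone h)]
    exact iSup_le fun n => (not_le.mp (notMem_of_lt_csInf (s := S) (hu_lt n) hSbdd)).le
  · have hlim := tendsto_measure_biInter_gt (μ := ν) (s := Iic) (a := sInf S)
      (fun _ _ => measurableSet_Iic.nullMeasurableSet) (fun _ _ _ hij => Iic_subset_Iic.mpr hij)
      ⟨sInf S + 1, by linarith, measure_ne_top ν _⟩
    have hI : ⋂ r > sInf S, Iic r = Iic (sInf S) := by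
      ext y
      simp only [mem_iInter, mem_Iic]
      exact ⟨le_of_forall_gt_imp_ge_of_dense, fun hy r hr => hy.trans hr.le⟩
    rw [hI] at hlim
    refine ge_of_tendsto hlim ?_
    filter_upwards [self_mem_nhdsWithin] with r hr
    obtain ⟨y, hyS, hyr⟩ := exists_lt_of_csInf_lt hS hr
    exact hyS.trans (measure_mono (Iic_subset_Iic.mpr hyr.le))

-- The last clause says that anything still addable at stage `n` is at most twice the increment
-- of stage `n`; it is written additively to avoid truncated subtraction in `ℝ≥0∞`.
theorem exists_greedy_subset_seq {Ω : Type*} [MeasurableSpace Ω] (P : Measure Ω) [IsFiniteMeasure P]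
    (A : Set Ω) (t : ℝ≥0∞) :
    ∃ C : ℕ → Set Ω, Monotone C ∧ (∀ n, MeasurableSet (C n) ∧ C n ⊆ A ∧ P (C n) ≤ t) ∧
      ∀ n B, MeasurableSet B → B ⊆ A \ C n → P (C n) + P B ≤ t →
        2 * P (C n) + P B ≤ 2 * P (C (n + 1)) := by
  let adm : Set Ω → Set (Set Ω) := fun C => {B | MeasurableSet B ∧ B ⊆ A \ C ∧ P C + P B ≤ t}
  let S := {C : Set Ω // MeasurableSet C ∧ C ⊆ A ∧ P C ≤ t}
  -- Each step adds an admissible set capturing at least half of the best possible gain.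
  have greedy : ∀ C : S, ∃ B ∈ adm C.1, ∀ B' ∈ adm C.1, P B' ≤ 2 * P B := by
    intro C
    obtain ⟨_, ⟨B, hB, rfl⟩, hBmax⟩ := ENNReal.exists_mem_forall_le_two_mul
      (s := P '' adm C.1) ⟨_, ∅, ⟨.empty, empty_subset _, by simpa using C.2.2.2⟩, rfl⟩
      (ne_top_of_le_ne_top (measure_ne_top P univ)
        (sSup_le (by rintro _ ⟨B, -, rfl⟩; exact measure_mono (subset_univ B))))
    exact ⟨B, hB, fun B' hB' => hBmax _ ⟨B', hB', rfl⟩⟩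
  choose B hB hBmax using greedy
  have hnext : ∀ C : S, P (C.1 ∪ B C) = P C.1 + P (B C) := fun C =>
    measure_union (disjoint_left.mpr fun _ hx hxB => ((hB C).2.1 hxB).2 hx) (hB C).1
  let next : S → S := fun C => ⟨C.1 ∪ B C, C.2.1.union (hB C).1,
    union_subset C.2.2.1 ((hB C).2.1.trans sdiff_subset), (hnext C).trans_le (hB C).2.2⟩
  let seq : ℕ → S := fun n => next^[n] ⟨∅, .empty, empty_subset _, by simp⟩
  have hseq : ∀ n, (seq (n + 1)).1 = (seq n).1 ∪ B (seq n) := fun n =>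
    congrArg Subtype.val (Function.iterate_succ_apply' next n _)
  refine ⟨fun n => (seq n).1, monotone_nat_of_le_succ fun n => hseq n ▸ subset_union_left,
    fun n => (seq n).2, fun n B' hB' hB'A hB't => ?_⟩
  simp only [hseq, hnext, mul_add]
  gcongr
  exact hBmax _ _ ⟨hB', hB'A, hB't⟩

section Atomless
variable {Ω : Type*} [MeasurableSpace Ω]

def Atomless (P : Measure Ω) : Prop :=
  ∀ A : Set Ω, MeasurableSet A → 0 < P A →
    ∃ B : Set Ω, MeasurableSet B ∧ B ⊆ A ∧ 0 < P B ∧ P B < P A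

variable {P : Measure Ω} [IsFiniteMeasure P]

theorem Atomless.exists_subset_measure_pos_two_mul_le (hP : Atomless P) {A : Set Ω}
    (hA : MeasurableSet A) (hA₀ : 0 < P A) :
    ∃ B ⊆ A, MeasurableSet B ∧ 0 < P B ∧ 2 * P B ≤ P A := by
  obtain ⟨B, hB, hBA, hB₀, hBA'⟩ := hP A hA hA₀
  have hsplit : P B + P (A \ B) = P A := by
    rw [measure_add_sdiff hB.nullMeasurableSet, union_eq_right.mpr hBA]
  rcases le_total (P B) (P (A \ B)) with h | h
  · exact ⟨B, hBA, hB, hB₀, by rw [two_mul, ← hsplit]; gcongr⟩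
  · refine ⟨A \ B, sdiff_subset, hA.diff hB, ?_, by rw [two_mul, ← hsplit]; gcongr⟩
    rw [measure_sdiff hBA hB.nullMeasurableSet (measure_ne_top P B)]
    exact tsub_pos_of_lt hBA'

theorem Atomless.exists_subset_measure_pos_le (hP : Atomless P) {A : Set Ω}
    (hA : MeasurableSet A) (hA₀ : 0 < P A) {ε : ℝ≥0∞} (hε : 0 < ε) :
    ∃ B ⊆ A, MeasurableSet B ∧ 0 < P B ∧ P B ≤ ε := by
  have halving : ∀ n : ℕ, ∃ B ⊆ A, MeasurableSet B ∧ 0 < P B ∧ 2 ^ n * P B ≤ P A := by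
    intro n
    induction n with
    | zero => exact ⟨A, subset_rfl, hA, hA₀, by simp⟩
    | succ n ih =>
      obtain ⟨B, hBA, hB, hB₀, hBn⟩ := ih
      obtain ⟨C, hCB, hC, hC₀, hCB'⟩ := hP.exists_subset_measure_pos_two_mul_le hB hB₀
      refine ⟨C, hCB.trans hBA, hC, hC₀, ?_⟩
      calc 2 ^ (n + 1) * P C = 2 ^ n * (2 * P C) := by ring
        _ ≤ 2 ^ n * P B := by gcongr
        _ ≤ P A := hBn
  obtain ⟨n, hn⟩ := ENNReal.exists_inv_two_pow_lt (ENNReal.div_pos hε.ne' (measure_ne_top P A)).ne'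
  obtain ⟨B, hBA, hB, hB₀, hBn⟩ := halving n
  refine ⟨B, hBA, hB, hB₀, ?_⟩
  calc P B = 2⁻¹ ^ n * (2 ^ n * P B) := by
        rw [← mul_assoc, ← mul_pow, ENNReal.inv_mul_cancel two_ne_zero ENNReal.ofNat_ne_top,
          one_pow, one_mul]
    _ ≤ 2⁻¹ ^ n * P A := by gcongr
    _ ≤ ε / P A * P A := by gcongr
    _ = ε := ENNReal.div_mul_cancel hA₀.ne' (measure_ne_top P A)

/-- Sierpiński's theorem. -/
theorem Atomless.exists_subset_measure_eq (hP : Atomless P) {A : Set Ω} (hA : MeasurableSet A)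
    {t : ℝ≥0∞} (ht : t ≤ P A) : ∃ C ⊆ A, MeasurableSet C ∧ P C = t := by
  obtain ⟨C, hmono, hC, hgreedy⟩ := exists_greedy_subset_seq P A t
  have hUm : MeasurableSet (⋃ n, C n) := .iUnion fun n => (hC n).1
  have hUA : ⋃ n, C n ⊆ A := iUnion_subset fun n => (hC n).2.1
  have hUt : P (⋃ n, C n) ≤ t := by
    rw [hmono.measure_iUnion]; exact iSup_le fun n => (hC n).2.2
  refine ⟨⋃ n, C n, hUA, hUm, hUt.antisymm (not_lt.mp fun hlt => ?_)⟩
  -- Otherwise a small set outside the union could be added at every step, forcing unbounded growth.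
  obtain ⟨B, hBA, hB, hB₀, hBt⟩ := hP.exists_subset_measure_pos_le (hA.diff hUm)
    (by rw [measure_sdiff hUA hUm.nullMeasurableSet (measure_ne_top P _)]
        exact tsub_pos_of_lt (hlt.trans_le ht))
    (tsub_pos_of_lt hlt)
  have hgrow : ∀ n : ℕ, n * P B ≤ 2 * P (C n) := by
    intro n
    induction n with
    | zero => simp
    | succ n ih =>
      have hCU : C n ⊆ ⋃ n, C n := subset_iUnion C n
      refine le_trans ?_ (hgreedy n B hB (hBA.trans (sdiff_subset_sdiff_right hCU))
        ((add_le_add (measure_mono hCU) hBt).trans (add_tsub_cancel_of_le hUt).le))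
      push_cast
      rw [add_mul, one_mul]
      gcongr
  obtain ⟨n, hn⟩ := ENNReal.exists_nat_mul_gt hB₀.ne'
    (ENNReal.mul_ne_top (ENNReal.ofNat_ne_top (n := 2)) (measure_ne_top P univ))
  exact (hn.trans_le (hgrow n)).not_ge (by gcongr; exact subset_univ _)

theorem Atomless.exists_measure_eq_between (hP : Atomless P) {A B : Set Ω}
    (hA : MeasurableSet A) (hB : MeasurableSet B) (hAB : A ⊆ B) {t : ℝ≥0∞}
    (hAt : P A ≤ t) (htB : t ≤ P B) : ∃ C, A ⊆ C ∧ C ⊆ B ∧ MeasurableSet C ∧ P C = t := by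
  obtain ⟨D, hDBA, hD, hDt⟩ := hP.exists_subset_measure_eq (hB.diff hA) (t := t - P A) (by
    rw [measure_sdiff hAB hA.nullMeasurableSet (measure_ne_top P A)]; gcongr)
  refine ⟨A ∪ D, subset_union_left, union_subset hAB (hDBA.trans sdiff_subset), hA.union hD, ?_⟩
  rw [measure_union (disjoint_left.mpr fun _ hx hxD => (hDBA hxD).2 hx) hD, hDt,
    add_tsub_cancel_of_le hAt]

theorem Atomless.exists_lower_subset_measure_eq (hP : Atomless P) {A : Set Ω}
    (hA : MeasurableSet A) {X : Ω → ℝ} (hX : Measurable X) {t : ℝ≥0∞} (ht : t ≤ P A) :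
    ∃ C ⊆ A, MeasurableSet C ∧ P C = t ∧ ∀ ω ∈ C, ∀ ω' ∈ A \ C, X ω ≤ X ω' := by
  rcases (zero_le (a := t)).eq_or_lt with rfl | ht₀
  · exact ⟨∅, empty_subset _, .empty, measure_empty, by simp⟩
  rcases ht.eq_or_lt with rfl | htA
  · exact ⟨A, subset_rfl, hA, rfl, by simp⟩
  set ν := (P.restrict A).map X
  have hν : ∀ s, MeasurableSet s → ν s = P (A ∩ X ⁻¹' s) := fun s hs => by
    rw [Measure.map_apply hX hs, Measure.restrict_apply (hX hs), inter_comm]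
  -- Cut `A` at a level `x` of `X`, splitting the level set `A ∩ {X = x}` as needed.
  obtain ⟨x, hlo, hhi⟩ := exists_measure_Iio_le_le_measure_Iic ν ht₀ (by simpa [hν])
  obtain ⟨C, hLC, hCU, hC, hCt⟩ := hP.exists_measure_eq_between (t := t)
    (hA.inter (hX measurableSet_Iio)) (hA.inter (hX measurableSet_Iic))
    (inter_subset_inter_right _ (preimage_mono Iio_subset_Iic_self))
    (by rwa [← hν _ measurableSet_Iio]) (by rwa [← hν _ measurableSet_Iic])
  refine ⟨C, hCU.trans inter_subset_left, hC, hCt, fun ω hω ω' hω' => ?_⟩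
  exact (hCU hω).2.trans (not_lt.mp fun h => hω'.2 (hLC ⟨hω'.1, h⟩))

end Atomless

section BoundedMeasurable
variable {Ω : Type*} [MeasurableSpace Ω]

def bbSubmodule (Ω : Type*) [MeasurableSpace Ω] : Submodule ℝ (Ω → ℝ) where
  carrier := Bb Ω
  add_mem' := fun ⟨hX, a, ha⟩ ⟨hY, b, hb⟩ =>
    ⟨hX.add hY, a + b, fun ω => (abs_add_le _ _).trans (add_le_add (ha ω) (hb ω))⟩
  zero_mem' := ⟨measurable_const, 0, fun _ => by simp⟩
  smul_mem' := fun c _ ⟨hX, a, ha⟩ => ⟨hX.const_smul c, |c| * a, fun ω => by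
    simpa [abs_mul] using mul_le_mul_of_nonneg_left (ha ω) (abs_nonneg c)⟩

theorem const_mem_Bb (m : ℝ) : (fun _ : Ω => m) ∈ Bb Ω :=
  ⟨measurable_const, |m|, fun _ => le_rfl⟩

theorem comp_mem_Bb {G : Type*} [Finite G] [MeasurableSpace G] [MeasurableSingletonClass G]
    {s : Ω → G} (hs : Measurable s) (v : G → ℝ) : (fun ω => v (s ω)) ∈ Bb Ω := by
  obtain ⟨c, hc⟩ := (finite_range fun g => |v g|).bddAbove
  exact ⟨(measurable_of_finite v).comp hs, c, fun ω => hc (mem_range_self (s ω))⟩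

theorem IsConvexOn.convexOn {H : (Ω → ℝ) → ℝ} (hconv : IsConvexOn (Bb Ω) H) :
    ConvexOn ℝ (Bb Ω) H :=
  ⟨(bbSubmodule Ω).convex, fun X hX Y hY a b ha _ hab => by
    obtain rfl : b = 1 - a := by linarith
    exact hconv X hX Y hY a ha (by linarith)⟩

def IsLawInvariant (P : Measure Ω) (H : (Ω → ℝ) → ℝ) : Prop :=
  ∀ X ∈ Bb Ω, ∀ Y ∈ Bb Ω, P.map X = P.map Y → H X = H Y

theorem IsPremium.apply_const {H : (Ω → ℝ) → ℝ} (hH : IsPremium (Bb Ω) H) (m : ℝ) :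
    H (fun _ => m) = m := by
  simpa [hH.2.1] using hH.1 _ (const_mem_Bb 0) m

theorem piecewise_mem_Bb {N : Set Ω} (hN : MeasurableSet N) {X Y : Ω → ℝ} [DecidablePred (· ∈ N)]
    (hX : X ∈ Bb Ω) (hY : Y ∈ Bb Ω) : N.piecewise X Y ∈ Bb Ω := by
  obtain ⟨hXm, a, ha⟩ := hX
  obtain ⟨hYm, b, hb⟩ := hY
  refine ⟨hXm.piecewise hN hYm, max a b, fun ω => ?_⟩
  by_cases hω : ω ∈ N
  · simpa [hω] using le_max_of_le_left (ha ω)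
  · simpa [hω] using le_max_of_le_right (hb ω)

theorem integrable_of_mem_Bb {P : Measure Ω} [IsFiniteMeasure P] {Z : Ω → ℝ} (hZ : Z ∈ Bb Ω) :
    Integrable Z P :=
  let ⟨hm, _, hb⟩ := hZ
  (integrable_const _).mono' hm.aestronglyMeasurable (ae_of_all _ hb)

end BoundedMeasurable

section UniformLaw
variable {Ω G : Type*} [MeasurableSpace Ω] {P : Measure Ω} [Fintype G] [MeasurableSpace G]
  [MeasurableSingletonClass G] {s : Ω → G}

theorem integral_comp_eq_of_uniform [IsFiniteMeasure P] (hsm : Measurable s)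
    (hs : ∀ g, P (s ⁻¹' {g}) = (Fintype.card G : ℝ≥0∞)⁻¹) (v : G → ℝ) :
    ∫ ω, v (s ω) ∂P = (∑ g, v g) / Fintype.card G := by
  rw [← integral_map hsm.aemeasurable (measurable_of_finite v).aestronglyMeasurable,
    integral_fintype (.of_finite), Finset.sum_div]
  refine Finset.sum_congr rfl fun g _ => ?_
  rw [measureReal_def, Measure.map_apply hsm (measurableSet_singleton g), hs, smul_eq_mul,
    ENNReal.toReal_inv, ENNReal.toReal_natCast, inv_mul_eq_div]

variable [AddGroup G] [DiscreteMeasurableSpace G]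

theorem map_comp_add_eq_of_uniform (hsm : Measurable s)
    (hs : ∀ g, P (s ⁻¹' {g}) = (Fintype.card G : ℝ≥0∞)⁻¹) (v : G → ℝ) (g : G) :
    P.map (fun ω => v (s ω + g)) = P.map (fun ω => v (s ω)) := by
  have hsg : Measurable fun ω => s ω + g := (Measurable.of_discrete (f := (· + g))).comp hsm
  have hshift : P.map (fun ω => s ω + g) = P.map s := by
    refine Measure.ext_iff_singleton.mpr fun a => ?_
    rw [Measure.map_apply hsg (measurableSet_singleton a),
      Measure.map_apply hsm (measurableSet_singleton a), hs, ← hs (a - g)]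
    congr 1
    ext ω
    simp [eq_sub_iff_add_eq]
  change P.map (v ∘ fun ω => s ω + g) = P.map (v ∘ s)
  rw [← Measure.map_map (measurable_of_finite v) hsg, hshift,
    Measure.map_map (measurable_of_finite v) hsm]

theorem sum_div_card_le_of_uniform {H : (Ω → ℝ) → ℝ} (hH : IsPremium (Bb Ω) H)
    (hconv : IsConvexOn (Bb Ω) H)
    (hlaw : IsLawInvariant P H) (hsm : Measurable s)
    (hs : ∀ g, P (s ⁻¹' {g}) = (Fintype.card G : ℝ≥0∞)⁻¹) (v : G → ℝ) :
    (∑ g, v g) / Fintype.card G ≤ H (fun ω => v (s ω)) := by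
  have hcard : (Fintype.card G : ℝ) ≠ 0 := Nat.cast_ne_zero.mpr Fintype.card_ne_zero
  have hshift_mem : ∀ g, (fun ω => v (s ω + g)) ∈ Bb Ω := fun g =>
    comp_mem_Bb ((Measurable.of_discrete (f := (· + g))).comp hsm) v
  have hmean : ∑ g : G, (Fintype.card G : ℝ)⁻¹ • (fun ω => v (s ω + g)) =
      fun _ => (∑ g, v g) / Fintype.card G := by
    funext ω
    simp only [Finset.sum_apply, Pi.smul_apply, smul_eq_mul, ← Finset.mul_sum]
    rw [Fintype.sum_equiv (Equiv.addLeft (s ω)) (fun g => v (s ω + g)) v fun _ => rfl,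
      inv_mul_eq_div]
  have hjensen := hconv.convexOn.map_sum_le (t := Finset.univ)
    (w := fun _ => (Fintype.card G : ℝ)⁻¹) (p := fun g ω => v (s ω + g))
    (fun _ _ => by positivity) (by simp [hcard]) (fun g _ => hshift_mem g)
  rw [hmean, hH.apply_const] at hjensen
  refine hjensen.trans_eq ?_
  simp_rw [hlaw _ (hshift_mem _) _ (comp_mem_Bb hsm v) (map_comp_add_eq_of_uniform hsm hs v _)]
  simp [Finset.card_univ, hcard]

end UniformLaw

section ContinuityFromAbove
variable {Ω : Type*} [MeasurableSpace Ω] {H : (Ω → ℝ) → ℝ}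

def IsContinuousFromAbove (H : (Ω → ℝ) → ℝ) : Prop :=
  ∀ X : ℕ → Ω → ℝ, (∀ n, X n ∈ Bb Ω) → (∀ n, ∀ ω, X (n + 1) ω ≤ X n ω) →
    (∀ ω, (⨅ n, X n ω) = 0) → (⨅ n, H (X n)) = 0

theorem IsConvexOn.le_mul_apply_inv_smul_of_antitone_tendsto (hconv : IsConvexOn (Bb Ω) H)
    (hcont : IsContinuousFromAbove H) {X : Ω → ℝ} (hX : X ∈ Bb Ω) {Y : ℕ → Ω → ℝ}
    (hY : ∀ k, Y k ∈ Bb Ω) (hanti : ∀ ω, Antitone (Y · ω))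
    (hlim : ∀ ω, Tendsto (Y · ω) atTop (𝓝 (X ω))) {a : ℝ} (ha : ∀ k, a ≤ H (Y k))
    {t : ℝ} (ht₀ : 0 < t) (ht₁ : t < 1) : a ≤ t * H (t⁻¹ • X) := by
  -- `Y k = t • (t⁻¹ • X) + (1 - t) • W k`, and `⨅ k, H (W k) = 0` by continuity from above.
  have ht₁' : 0 < 1 - t := by linarith
  set W : ℕ → Ω → ℝ := fun k => (1 - t)⁻¹ • (Y k - X)
  have hW : ∀ k, W k ∈ Bb Ω := fun k =>
    (bbSubmodule Ω).smul_mem _ ((bbSubmodule Ω).sub_mem (hY k) hX)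
  have hW0 : ⨅ k, H (W k) = 0 := by
    refine hcont W hW (fun k ω => ?_) (fun ω => ?_)
    · exact mul_le_mul_of_nonneg_left (sub_le_sub_right (hanti ω k.le_succ) _) (by positivity)
    · refine iInf_eq_of_forall_le_of_tendsto (F := atTop) (fun k => mul_nonneg (by positivity)
        (sub_nonneg.mpr ((hanti ω).le_of_tendsto (hlim ω) k))) ?_
      simpa [W] using ((hlim ω).sub_const (X ω)).const_mul (1 - t)⁻¹
  have hsplit : ∀ k, H (Y k) ≤ t * H (t⁻¹ • X) + (1 - t) * H (W k) := fun k => by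
    convert hconv _ ((bbSubmodule Ω).smul_mem t⁻¹ hX) _ (hW k) t ht₀.le ht₁.le using 2
    funext ω
    simp only [W, Pi.smul_apply, Pi.sub_apply, smul_eq_mul]
    field_simp
    ring
  by_contra! hlt
  have : (a - t * H (t⁻¹ • X)) / (1 - t) ≤ ⨅ k, H (W k) := le_ciInf fun k => by
    rw [div_le_iff₀ ht₁']
    linarith [ha k, hsplit k]
  rw [hW0] at this
  exact this.not_gt (div_pos (by linarith) ht₁')

theorem IsConvexOn.le_apply_of_antitone_tendsto (hconv : IsConvexOn (Bb Ω) H)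
    (hcont : IsContinuousFromAbove H) {X : Ω → ℝ} (hX : X ∈ Bb Ω) {Y : ℕ → Ω → ℝ}
    (hY : ∀ k, Y k ∈ Bb Ω) (hanti : ∀ ω, Antitone (Y · ω))
    (hlim : ∀ ω, Tendsto (Y · ω) atTop (𝓝 (X ω))) {a : ℝ} (ha : ∀ k, a ≤ H (Y k)) :
    a ≤ H X := by
  set g : ℝ → ℝ := fun t => H (t • X)
  have hg : Continuous g := by
    have hmem : ∀ c : ℝ, c • X ∈ Bb Ω := fun c => (bbSubmodule Ω).smul_mem c hX
    have hconvex : ConvexOn ℝ univ g := ⟨convex_univ, fun x _ y _ a b ha hb hab => by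
      simpa [g, add_smul, smul_smul] using hconv.convexOn.2 (hmem x) (hmem y) ha hb hab⟩
    exact continuousOn_univ.mp (hconvex.continuousOn isOpen_univ)
  have hlim₁ : Tendsto (fun t => t * g t⁻¹) (𝓝[<] 1) (𝓝 (H X)) := by
    have : ContinuousAt (fun t => t * g t⁻¹) 1 :=
      continuousAt_id.mul (hg.continuousAt.comp (continuousAt_inv₀ one_ne_zero))
    simpa [g] using this.tendsto.mono_left nhdsWithin_le_nhds
  exact ge_of_tendsto hlim₁ (eventually_of_mem (Ioo_mem_nhdsLT zero_lt_one) fun t ht =>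
    hconv.le_mul_apply_inv_smul_of_antitone_tendsto hcont hX hY hanti hlim ha ht.1 ht.2)

theorem IsConvexOn.le_apply_of_antitone_ae_tendsto {P : Measure Ω} (hconv : IsConvexOn (Bb Ω) H)
    (hcont : IsContinuousFromAbove H) (hlaw : IsLawInvariant P H) {X : Ω → ℝ} (hX : X ∈ Bb Ω)
    {Y : ℕ → Ω → ℝ} (hY : ∀ k, Y k ∈ Bb Ω) (hanti : ∀ ω, Antitone (Y · ω))
    (hlim : ∀ᵐ ω ∂P, Tendsto (Y · ω) atTop (𝓝 (X ω))) {a : ℝ} (ha : ∀ k, a ≤ H (Y k)) :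
    a ≤ H X := by
  classical
  -- Replace `Y k` by `X` on a null set containing the points of non-convergence.
  set N := toMeasurable P {ω | ¬Tendsto (Y · ω) atTop (𝓝 (X ω))}
  have hN : MeasurableSet N := measurableSet_toMeasurable _ _
  have hN0 : P N = 0 := by rw [measure_toMeasurable]; exact ae_iff.mp hlim
  set Y' : ℕ → Ω → ℝ := fun k => N.piecewise X (Y k)
  have hY' : ∀ k, Y' k ∈ Bb Ω := fun k => piecewise_mem_Bb hN hX (hY k)
  have hY'Y : ∀ k, Y' k =ᵐ[P] Y k := fun k => by
    filter_upwards [measure_eq_zero_iff_ae_notMem.mp hN0] with ω hω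
    exact piecewise_eq_of_notMem _ _ _ hω
  refine hconv.le_apply_of_antitone_tendsto hcont hX hY' (fun ω => ?_) (fun ω => ?_)
    fun k => (ha k).trans_eq (hlaw _ (hY k) _ (hY' k) (Measure.map_congr (hY'Y k)).symm)
  · by_cases hω : ω ∈ N
    · simp [Y', hω, antitone_const]
    · simpa [Y', hω] using hanti ω
  · by_cases hω : ω ∈ N
    · simp [Y', hω]
    · simpa [Y', hω] using not_not.mp fun h => hω (subset_toMeasurable _ _ h)

end ContinuityFromAbove

section SplitIndex
variable {Ω : Type*} {s : Ω → ℕ} {D : Set Ω}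

noncomputable def splitIndex (s : Ω → ℕ) (D : Set Ω) (ω : Ω) : ℕ :=
  2 * s ω + Dᶜ.indicator 1 ω

theorem splitIndex_of_mem {ω : Ω} (h : ω ∈ D) : splitIndex s D ω = 2 * s ω := by
  simp [splitIndex, h]

theorem splitIndex_of_notMem {ω : Ω} (h : ω ∉ D) : splitIndex s D ω = 2 * s ω + 1 := by
  simp [splitIndex, h]

theorem splitIndex_div_two (ω : Ω) : splitIndex s D ω / 2 = s ω := by
  by_cases h : ω ∈ D
  · rw [splitIndex_of_mem h]; omega
  · rw [splitIndex_of_notMem h]; omega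

theorem lt_or_of_splitIndex_lt {ω ω' : Ω} (h : splitIndex s D ω < splitIndex s D ω') :
    s ω < s ω' ∨ s ω = s ω' ∧ ω ∈ D ∧ ω' ∉ D := by
  by_cases hω : ω ∈ D <;> by_cases hω' : ω' ∈ D <;>
    simp only [splitIndex_of_mem, splitIndex_of_notMem, hω, hω', not_false_eq_true] at h <;>
    simp only [hω, hω', not_true_eq_false, not_false_eq_true, and_true, and_false] <;> omega

theorem preimage_splitIndex_two_mul (i : ℕ) : splitIndex s D ⁻¹' {2 * i} = s ⁻¹' {i} ∩ D := by
  ext ω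
  by_cases h : ω ∈ D
  · simp [splitIndex_of_mem h, h]
  · simp [splitIndex_of_notMem h, h]; omega

theorem preimage_splitIndex_two_mul_add_one (i : ℕ) :
    splitIndex s D ⁻¹' {2 * i + 1} = s ⁻¹' {i} \ D := by
  ext ω
  by_cases h : ω ∈ D
  · simp [splitIndex_of_mem h, h]; omega
  · simp [splitIndex_of_notMem h, h]

theorem measurable_splitIndex [MeasurableSpace Ω] (hs : Measurable s) (hD : MeasurableSet D) :
    Measurable (splitIndex s D) :=
  (measurable_const.mul hs).add (measurable_const.indicator hD.compl)

end SplitIndex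

section QuantilePartition
variable {Ω : Type*} [MeasurableSpace Ω] {P : Measure Ω} {X : Ω → ℝ} {N : ℕ} {s : Ω → ℕ}

structure IsQuantilePartition (P : Measure Ω) (X : Ω → ℝ) (N : ℕ) (s : Ω → ℕ) : Prop where
  measurable : Measurable s
  lt : ∀ ω, s ω < N
  measure_fiber : ∀ j < N, P (s ⁻¹' {j}) = (N : ℝ≥0∞)⁻¹
  le_of_lt : ∀ ω ω', s ω < s ω' → X ω ≤ X ω'

theorem isQuantilePartition_one [IsProbabilityMeasure P] :
    IsQuantilePartition P X 1 fun _ => 0 :=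
  ⟨measurable_const, fun _ => one_pos, fun j hj => by simp [Nat.lt_one_iff.mp hj],
    fun _ _ h => absurd h (lt_irrefl 0)⟩

theorem IsQuantilePartition.exists_refine [IsFiniteMeasure P]
    (hs : IsQuantilePartition P X N s) (hP : Atomless P) (hX : Measurable X) :
    ∃ s', IsQuantilePartition P X (2 * N) s' ∧ ∀ ω, s' ω / 2 = s ω := by
  choose C hCs hC hCP hClow using fun j => hP.exists_lower_subset_measure_eq
    (hs.measurable (measurableSet_singleton j)) hX (t := P (s ⁻¹' {j}) / 2) ENNReal.half_le_self
  set D := ⋃ j, C j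
  have hD : ∀ i, s ⁻¹' {i} ∩ D = C i := fun i => by
    refine subset_antisymm (fun ω ⟨hωi, hωD⟩ => ?_) fun ω hω => ⟨hCs i hω, mem_iUnion_of_mem i hω⟩
    obtain ⟨j, hj⟩ := mem_iUnion.mp hωD
    rwa [show i = j from (hωi : s ω = i).symm.trans (hCs j hj)]
  have half_inv : ((2 * N : ℕ) : ℝ≥0∞)⁻¹ = (N : ℝ≥0∞)⁻¹ / 2 := by
    rw [Nat.cast_mul, ENNReal.mul_inv (by simp) (by simp), div_eq_mul_inv, mul_comm]
    norm_num
  refine ⟨splitIndex s D, ⟨measurable_splitIndex hs.measurable (.iUnion hC), fun ω => ?_,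
    fun j hj => ?_, fun ω ω' h => ?_⟩, splitIndex_div_two⟩
  · have := hs.lt ω
    have := splitIndex_div_two (s := s) (D := D) ω
    omega
  · obtain ⟨i, rfl | rfl⟩ := Nat.even_or_odd' j
    · rw [preimage_splitIndex_two_mul, hD, hCP, hs.measure_fiber i (by omega), half_inv]
    · rw [preimage_splitIndex_two_mul_add_one, ← sdiff_self_inter, hD,
        measure_sdiff (hCs i) (hC i).nullMeasurableSet (measure_ne_top P _), hCP,
        ENNReal.sub_half (measure_ne_top P _), hs.measure_fiber i (by omega), half_inv]
  · rcases lt_or_of_splitIndex_lt h with hlt | ⟨heq, hω, hω'⟩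
    · exact hs.le_of_lt ω ω' hlt
    · exact hClow _ ω (hD _ ▸ ⟨rfl, hω⟩) ω' ⟨heq.symm, fun h => hω' (mem_iUnion_of_mem _ h)⟩

theorem exists_dyadic_quantilePartition [IsProbabilityMeasure P] (hP : Atomless P)
    (hX : Measurable X) : ∃ s : ℕ → Ω → ℕ,
      ∀ k, IsQuantilePartition P X (2 ^ k) (s k) ∧ ∀ ω, s (k + 1) ω / 2 = s k ω := by
  choose next hnext hdiv using fun (k : ℕ) (s : {s // IsQuantilePartition P X (2 ^ k) s}) =>
    s.2.exists_refine hP hX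
  let seq : (k : ℕ) → {s // IsQuantilePartition P X (2 ^ k) s} := fun k =>
    Nat.rec ⟨_, isQuantilePartition_one⟩ (fun k s => ⟨next k s, pow_succ' 2 k ▸ hnext k s⟩) k
  exact ⟨fun k => (seq k).1, fun k => ⟨(seq k).2, hdiv k (seq k)⟩⟩

theorem IsQuantilePartition.measurable_fin (hs : IsQuantilePartition P X N s) :
    Measurable fun ω => (⟨s ω, hs.lt ω⟩ : Fin N) :=
  measurable_to_countable' fun j => by
    convert hs.measurable (measurableSet_singleton j.val) using 1
    ext ω; simp [Fin.ext_iff]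

theorem IsQuantilePartition.measure_fin (hs : IsQuantilePartition P X N s) (j : Fin N) :
    P ((fun ω => (⟨s ω, hs.lt ω⟩ : Fin N)) ⁻¹' {j}) = (Fintype.card (Fin N) : ℝ≥0∞)⁻¹ := by
  rw [Fintype.card_fin, ← hs.measure_fiber j j.2]
  congr 1
  ext ω; simp [Fin.ext_iff]

theorem IsQuantilePartition.comp_mem_Bb (hs : IsQuantilePartition P X N s) (v : ℕ → ℝ) :
    (fun ω => v (s ω)) ∈ Bb Ω :=
  _root_.comp_mem_Bb hs.measurable_fin fun j => v j

theorem IsQuantilePartition.integral_comp [IsFiniteMeasure P] (hs : IsQuantilePartition P X N s)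
    (v : ℕ → ℝ) : ∫ ω, v (s ω) ∂P = (∑ j ∈ Finset.range N, v j) / N := by
  have := integral_comp_eq_of_uniform hs.measurable_fin hs.measure_fin fun j => v j
  rwa [Fintype.card_fin, Fin.sum_univ_eq_sum_range (fun j => v j)] at this

theorem IsQuantilePartition.sum_div_le_apply [NeZero N]
    {H : (Ω → ℝ) → ℝ} (hH : IsPremium (Bb Ω) H) (hconv : IsConvexOn (Bb Ω) H)
    (hlaw : IsLawInvariant P H) (hs : IsQuantilePartition P X N s) (v : ℕ → ℝ) :
    (∑ j ∈ Finset.range N, v j) / N ≤ H fun ω => v (s ω) := by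
  have := sum_div_card_le_of_uniform hH hconv hlaw hs.measurable_fin hs.measure_fin fun j => v j
  rwa [Fintype.card_fin, Fin.sum_univ_eq_sum_range (fun j => v j)] at this

end QuantilePartition

section BlockSup
variable {Ω : Type*} {X : Ω → ℝ} {c : ℝ}

noncomputable def blockSup (s : Ω → ℕ) (X : Ω → ℝ) (j : ℕ) : ℝ :=
  sSup (X '' (s ⁻¹' {j}))

theorem blockSup_le {s : Ω → ℕ} {j : ℕ} (hj : (s ⁻¹' {j}).Nonempty) {a : ℝ}
    (ha : ∀ ω, s ω = j → X ω ≤ a) : blockSup s X j ≤ a :=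
  csSup_le (hj.image X) (by rintro _ ⟨ω, hω, rfl⟩; exact ha ω hω)

theorem le_blockSup (hc : ∀ ω, |X ω| ≤ c) (s : Ω → ℕ) (ω : Ω) : X ω ≤ blockSup s X (s ω) :=
  le_csSup ⟨c, by rintro _ ⟨ω', -, rfl⟩; exact (abs_le.mp (hc ω')).2⟩ (mem_image_of_mem X rfl)

theorem blockSup_le_blockSup_of_div_two_eq (hc : ∀ ω, |X ω| ≤ c) {s s' : Ω → ℕ}
    (hss' : ∀ ω, s' ω / 2 = s ω) (ω : Ω) : blockSup s' X (s' ω) ≤ blockSup s X (s ω) :=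
  blockSup_le ⟨ω, rfl⟩ fun ω' hω' => by
    have : s ω' = s ω := by rw [← hss', ← hss', hω']
    exact this ▸ le_blockSup hc s ω'

end BlockSup

section UpperApproximation
variable {Ω : Type*} [MeasurableSpace Ω] {P : Measure Ω} {X : Ω → ℝ} {c : ℝ} {N : ℕ} {s : Ω → ℕ}

theorem blockSup_comp_mem_Bb (hc : ∀ ω, |X ω| ≤ c) (hs : Measurable s) :
    (fun ω => blockSup s X (s ω)) ∈ Bb Ω :=
  ⟨(Measurable.of_discrete (f := blockSup s X)).comp hs, c, fun ω => abs_le.mpr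
    ⟨(abs_le.mp (hc ω)).1.trans (le_blockSup hc s ω),
      blockSup_le ⟨ω, rfl⟩ fun ω' _ => (abs_le.mp (hc ω')).2⟩⟩

theorem IsQuantilePartition.integral_blockSup_le [IsFiniteMeasure P] [NeZero N]
    (hs : IsQuantilePartition P X N s) (hX : Measurable X) (hc : ∀ ω, |X ω| ≤ c) :
    ∫ ω, blockSup s X (s ω) ∂P ≤ ∫ ω, X ω ∂P + 2 * c / N := by
  have hne : ∀ j < N, (s ⁻¹' {j}).Nonempty := fun j hj =>
    nonempty_of_measure_ne_zero (μ := P) (by simp [hs.measure_fiber j hj])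
  -- On block `j`, `X ≥ b j` since the blocks are ordered along `X`, while the step function
  -- equals `b (j + 1)`; the gaps telescope.
  set b : ℕ → ℝ := fun j => if j = 0 then -c else blockSup s X (j - 1)
  have hgap : ∀ ω, blockSup s X (s ω) ≤ X ω + (b (s ω + 1) - b (s ω)) := fun ω => by
    suffices b (s ω) ≤ X ω by
      simp only [b, if_neg (Nat.succ_ne_zero _), Nat.add_sub_cancel]; linarith
    simp only [b]
    split_ifs with h0
    · exact (abs_le.mp (hc ω)).1
    · exact blockSup_le (hne _ (by have := hs.lt ω; omega)) fun ω' hω' =>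
        hs.le_of_lt ω' ω (by omega)
  have hX' : X ∈ Bb Ω := ⟨hX, c, hc⟩
  have hw : (fun ω => b (s ω + 1) - b (s ω)) ∈ Bb Ω :=
    hs.comp_mem_Bb fun j => b (j + 1) - b j
  calc ∫ ω, blockSup s X (s ω) ∂P ≤ ∫ ω, X ω + (b (s ω + 1) - b (s ω)) ∂P :=
        integral_mono (integrable_of_mem_Bb (blockSup_comp_mem_Bb hc hs.measurable))
          ((integrable_of_mem_Bb hX').add (integrable_of_mem_Bb hw)) hgap
    _ = ∫ ω, X ω ∂P + (b N - b 0) / N := by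
        rw [integral_add (integrable_of_mem_Bb hX') (integrable_of_mem_Bb hw),
          hs.integral_comp (fun j => b (j + 1) - b j), Finset.sum_range_sub]
    _ ≤ ∫ ω, X ω ∂P + 2 * c / N := by
        gcongr
        have hN := hne (N - 1) (Nat.sub_lt (NeZero.pos N) one_pos)
        simp only [b, if_pos rfl, if_neg (NeZero.ne N)]
        linarith [blockSup_le hN fun ω' _ => (abs_le.mp (hc ω')).2]

theorem exists_antitone_ae_tendsto [IsProbabilityMeasure P] (hP : Atomless P)
    {H : (Ω → ℝ) → ℝ} (hH : IsPremium (Bb Ω) H) (hconv : IsConvexOn (Bb Ω) H)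
    (hlaw : IsLawInvariant P H) (hX : Measurable X) (hc : ∀ ω, |X ω| ≤ c) :
    ∃ Y : ℕ → Ω → ℝ, (∀ k, Y k ∈ Bb Ω) ∧ (∀ ω, Antitone (Y · ω)) ∧
      (∀ᵐ ω ∂P, Tendsto (Y · ω) atTop (𝓝 (X ω))) ∧ ∀ k, ∫ ω, X ω ∂P ≤ H (Y k) := by
  obtain ⟨s, hs⟩ := exists_dyadic_quantilePartition hP hX
  set Y : ℕ → Ω → ℝ := fun k ω => blockSup (s k) X (s k ω)
  have hY : ∀ k, Y k ∈ Bb Ω := fun k => blockSup_comp_mem_Bb hc (hs k).1.measurable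
  have hXY : ∀ k, ∫ ω, X ω ∂P ≤ ∫ ω, Y k ω ∂P := fun k =>
    integral_mono (integrable_of_mem_Bb ⟨hX, c, hc⟩) (integrable_of_mem_Bb (hY k))
      (le_blockSup hc (s k))
  have hanti : ∀ ω, Antitone (Y · ω) := fun ω =>
    antitone_nat_of_succ_le fun k => blockSup_le_blockSup_of_div_two_eq hc (hs k).2 ω
  refine ⟨Y, hY, hanti, ?_, fun k => (hXY k).trans ?_⟩
  · refine tendsto_of_integral_tendsto_of_antitone (fun k => integrable_of_mem_Bb (hY k))
      (integrable_of_mem_Bb ⟨hX, c, hc⟩) ?_ (ae_of_all _ hanti)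
      (ae_of_all _ fun ω k => le_blockSup hc (s k) ω)
    have hgap : Tendsto (fun k : ℕ => ∫ ω, X ω ∂P + 2 * c / 2 ^ k) atTop (𝓝 (∫ ω, X ω ∂P)) := by
      simpa using tendsto_const_nhds.add
        (tendsto_const_nhds.div_atTop (tendsto_pow_atTop_atTop_of_one_lt (α := ℝ) one_lt_two))
    refine tendsto_of_tendsto_of_tendsto_of_le_of_le tendsto_const_nhds hgap hXY fun k => ?_
    simpa using (hs k).1.integral_blockSup_le hX hc
  · rw [(hs k).1.integral_comp]
    exact (hs k).1.sum_div_le_apply hH hconv hlaw _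

end UpperApproximation

/-- on an atomless probability space, a convex, law-invariant
premium principle on `B_b` that is continuous from above carries a safety
loading: `H(X) ≥ E_P(X)` for all `X ∈ B_b`. -/
theorem law_invariant_safety_loading {Ω : Type*} [MeasurableSpace Ω]
    (P : Measure Ω) [IsProbabilityMeasure P]
    (hatomless : ∀ A : Set Ω, MeasurableSet A → 0 < P A →
      ∃ B : Set Ω, MeasurableSet B ∧ B ⊆ A ∧ 0 < P B ∧ P B < P A)
    (H : (Ω → ℝ) → ℝ)
    (hH : IsPremium (Bb Ω) H) (hconv : IsConvexOn (Bb Ω) H)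
    (hlaw : ∀ X ∈ Bb Ω, ∀ Y ∈ Bb Ω, P.map X = P.map Y → H X = H Y)
    (hcont : ∀ X : ℕ → Ω → ℝ, (∀ n, X n ∈ Bb Ω) →
      (∀ n, ∀ ω, X (n + 1) ω ≤ X n ω) → (∀ ω, (⨅ n, X n ω) = 0) →
      (⨅ n, H (X n)) = 0) :
    ∀ X ∈ Bb Ω, (∫ ω, X ω ∂P) ≤ H X := by
  intro X hX
  obtain ⟨hXm, c, hc⟩ := id hX
  obtain ⟨Y, hY, hanti, hlim, hXY⟩ := exists_antitone_ae_tendsto hatomless hH hconv hlaw hXm hc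
  exact hconv.le_apply_of_antitone_ae_tendsto hcont hlaw hX hY hanti hlim hXY
end
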